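/- arXiv:2404.04599 — 3 statements merged into one kernel-verified Lean document; each statement's English description precedes it below -/
import Mathlib

section
/- Averaged map on an isotypic component is partial trace tensor identity (Corollary lemma-3262332, finite group case): Let G be a finite group, h, v₁, v₂ ≥ 1, and let μ : G →* Matrix.unitaryGroup (Fin h) ℂ be an irreducible unitary representation. Then for every matrix F indexed by rows (Fin v₂ × Fin h) and columns (Fin v₁ × Fin h), one has (1/|G|) * ∑_{g ∈ G} (1 ⊗ₖ (μ g)) * F * (1 ⊗ₖ (μ g))† = X ⊗ₖ 1, where X is the matrix with rows Fin v₂ and columns Fin v₁ given by X a b = (1/h) * ∑_{i : Fin h} F (a, i) (b, i), and 1 ⊗ₖ (μ g), X ⊗ₖ 1 are Kronecker products with identity matrices of the appropriate sizes. -/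
open scoped ComplexConjugate ComplexOrder Kronecker Matrix
open MeasureTheory

namespace PaperStmt

/-- The rank-one matrix `ψψ†` associated with a vector `ψ`. -/
noncomputable def outer {ι : Type*} (ψ : ι → ℂ) : Matrix ι ι ℂ :=
  Matrix.of fun x y => ψ x * conj (ψ y)

/-- The `N`-fold tensor power of a square matrix `ρ`. -/
noncomputable def tpow {ι : Type*} (ρ : Matrix ι ι ℂ) (N : ℕ) : Matrix (Fin N → ι) (Fin N → ι) ℂ :=
  Matrix.of fun x y => ∏ i, ρ (x i) (y i)

/-- `ψ` is a unit vector (for the ℓ² norm). -/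
def IsUnitVec {ι : Type*} [Fintype ι] (ψ : ι → ℂ) : Prop :=
  ∑ x, Complex.normSq (ψ x) = 1

/-- `0 ⊑ T ⊑ 1` in the Loewner order. -/
def IsTester {κ : Type*} [Fintype κ] [DecidableEq κ] (T : Matrix κ κ ℂ) : Prop :=
  T.PosSemidef ∧ ((1 : Matrix κ κ ℂ) - T).PosSemidef

/-- `ρ` is a density matrix: positive semidefinite with unit trace. -/
def IsDensity {ι : Type*} [Fintype ι] (ρ : Matrix ι ι ℂ) : Prop :=
  ρ.PosSemidef ∧ ρ.trace = 1

/-- The acceptance probability `tr (T · ρ^{⊗N})` of a tester `T` on `N` samples of `ρ`. -/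
noncomputable def acc {ι : Type*} [Fintype ι] {N : ℕ}
    (T : Matrix (Fin N → ι) (Fin N → ι) ℂ) (ρ : Matrix ι ι ℂ) : ℝ :=
  ((T * tpow ρ N).trace).re

/-- The trace distance `½ ∑ᵢ |λᵢ(ρ - σ)|` between (Hermitian) matrices. -/
noncomputable def traceDist {κ : Type*} [Fintype κ] [DecidableEq κ]
    (ρ σ : Matrix κ κ ℂ) : ℝ :=
  if h : (ρ - σ).IsHermitian then (1 / 2) * ∑ i, |h.eigenvalues i| else 0

/-- The local tester on `H_A` determined by a matrix `M` acting on Alice's registers. -/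
noncomputable def localA {d N : ℕ} (M : Matrix (Fin N → Fin d) (Fin N → Fin d) ℂ) :
    Matrix (Fin N → Fin d × Fin d) (Fin N → Fin d × Fin d) ℂ :=
  Matrix.of fun x y =>
    M (fun i => (x i).1) (fun i => (y i).1) *
      (if (fun i => (x i).2) = (fun i => (y i).2) then 1 else 0)

/-- The vector `(I ⊗ U) ψ` : the unitary `U` applied to the `B` part of `ψ`. -/
noncomputable def applyB {d : ℕ} (U : Matrix (Fin d) (Fin d) ℂ) (ψ : Fin d × Fin d → ℂ) :
    Fin d × Fin d → ℂ :=
  fun p => ∑ k, U p.2 k * ψ (p.1, k)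

/-- The partial trace over the second (`B`) tensor factor. -/
noncomputable def ptraceB {d : ℕ} (M : Matrix (Fin d × Fin d) (Fin d × Fin d) ℂ) :
    Matrix (Fin d) (Fin d) ℂ :=
  Matrix.of fun a b => ∑ j, M (a, j) (b, j)


/-- A matrix unitary representation is irreducible if its only invariant subspaces are
`⊥` and `⊤`. -/
def IsIrreducibleRep {G : Type*} [Group G] {h : ℕ}
    (μ : G →* Matrix.unitaryGroup (Fin h) ℂ) : Prop :=
  ∀ W : Submodule ℂ (Fin h → ℂ),
    (∀ (g : G) (w : Fin h → ℂ), w ∈ W →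
      ((μ g : Matrix (Fin h) (Fin h) ℂ).mulVec w) ∈ W) →
    W = ⊥ ∨ W = ⊤

/-- Two matrix unitary representations are isomorphic if some linear equivalence
intertwines them. -/
def RepIso {G : Type*} [Group G] {h₁ h₂ : ℕ}
    (μ₁ : G →* Matrix.unitaryGroup (Fin h₁) ℂ)
    (μ₂ : G →* Matrix.unitaryGroup (Fin h₂) ℂ) : Prop :=
  ∃ J : (Fin h₁ → ℂ) ≃ₗ[ℂ] (Fin h₂ → ℂ),
    ∀ (g : G) (w : Fin h₁ → ℂ),
      J ((μ₁ g : Matrix (Fin h₁) (Fin h₁) ℂ).mulVec w) =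
        (μ₂ g : Matrix (Fin h₂) (Fin h₂) ℂ).mulVec (J w)


lemma commute_scalar {G : Type*} [Group G] {h : ℕ} (hh : 1 ≤ h)
    (μ : G →* Matrix.unitaryGroup (Fin h) ℂ)
    (hirr : ∀ W : Submodule ℂ (Fin h → ℂ),
      (∀ (g : G) (w : Fin h → ℂ), w ∈ W →
        ((μ g : Matrix (Fin h) (Fin h) ℂ).mulVec w) ∈ W) → W = ⊥ ∨ W = ⊤)
    (A : Matrix (Fin h) (Fin h) ℂ)
    (hA : ∀ g, (μ g : Matrix (Fin h) (Fin h) ℂ) * A = A * μ g) :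
    ∃ c : ℂ, A = c • 1 := by
  haveI : NeZero h := ⟨by omega⟩
  haveI : Nontrivial (Fin h → ℂ) := inferInstance
  obtain ⟨c, hc⟩ := Module.End.exists_eigenvalue (Matrix.mulVecLin A)
  refine ⟨c, ?_⟩
  set W := Module.End.eigenspace (Matrix.mulVecLin A) c with hW
  have hWbot : W ≠ ⊥ := hc
  have hinv : ∀ (g : G) (w : Fin h → ℂ), w ∈ W →
      ((μ g : Matrix (Fin h) (Fin h) ℂ).mulVec w) ∈ W := by
    intro g w hw
    rw [hW, Module.End.mem_eigenspace_iff] at hw ⊢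
    simp only [Matrix.mulVecLin_apply] at hw ⊢
    rw [Matrix.mulVec_mulVec, ← hA g, ← Matrix.mulVec_mulVec, hw, Matrix.mulVec_smul]
  rcases hirr W hinv with hb | ht
  · exact absurd hb hWbot
  · have : ∀ w : Fin h → ℂ, A.mulVec w = c • w := by
      intro w
      have : w ∈ W := ht ▸ Submodule.mem_top
      rw [hW, Module.End.mem_eigenspace_iff] at this
      simpa using this
    ext i j
    have h2 := congrFun (this (Pi.single j 1)) i
    simp [Matrix.mulVec_single, Matrix.one_apply, Pi.single_apply, eq_comm] at h2 ⊢
    simpa [mul_comm] using h2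

lemma schur_avg {G : Type*} [Group G] [Fintype G] {h : ℕ} (hh : 1 ≤ h)
    (μ : G →* Matrix.unitaryGroup (Fin h) ℂ)
    (hirr : ∀ W : Submodule ℂ (Fin h → ℂ),
      (∀ (g : G) (w : Fin h → ℂ), w ∈ W →
        ((μ g : Matrix (Fin h) (Fin h) ℂ).mulVec w) ∈ W) → W = ⊥ ∨ W = ⊤)
    (M : Matrix (Fin h) (Fin h) ℂ) :
    (1 / (Fintype.card G : ℂ)) •
      ∑ g : G, (μ g : Matrix (Fin h) (Fin h) ℂ) * M * (μ g : Matrix (Fin h) (Fin h) ℂ)ᴴ =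
      (M.trace / h) • 1 := by
  set A : Matrix (Fin h) (Fin h) ℂ :=
    ∑ g : G, (μ g : Matrix (Fin h) (Fin h) ℂ) * M * (μ g : Matrix (Fin h) (Fin h) ℂ)ᴴ with hAdef
  have hstar : ∀ g : G, (μ g : Matrix (Fin h) (Fin h) ℂ)ᴴ * μ g = 1 :=
    fun g => Matrix.UnitaryGroup.star_mul_self (μ g)
  have hstar' : ∀ g : G, (μ g : Matrix (Fin h) (Fin h) ℂ) * (μ g : Matrix (Fin h) (Fin h) ℂ)ᴴ = 1 := by
    intro g
    rw [← Matrix.star_eq_conjTranspose]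
    calc (μ g : Matrix (Fin h) (Fin h) ℂ) * star (μ g : Matrix (Fin h) (Fin h) ℂ)
        = ((μ g * star (μ g) : Matrix.unitaryGroup (Fin h) ℂ) : Matrix (Fin h) (Fin h) ℂ) := by
          push_cast; rfl
      _ = 1 := by rw [Unitary.mul_star_self (μ g)]; rfl
  have hkey : ∀ g₀ : G, (μ g₀ : Matrix (Fin h) (Fin h) ℂ) * A * (μ g₀ : Matrix (Fin h) (Fin h) ℂ)ᴴ = A := by
    intro g₀
    rw [hAdef, Finset.mul_sum, Finset.sum_mul]
    refine Fintype.sum_bijective (fun g => g₀ * g) (Group.mulLeft_bijective g₀) _ _ ?_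
    intro g
    have hmul : ((μ (g₀ * g)) : Matrix (Fin h) (Fin h) ℂ) =
        (μ g₀ : Matrix (Fin h) (Fin h) ℂ) * (μ g : Matrix (Fin h) (Fin h) ℂ) := by
      have : μ (g₀ * g) = μ g₀ * μ g := map_mul μ g₀ g
      rw [this]; rfl
    rw [hmul, Matrix.conjTranspose_mul]
    simp [mul_assoc]
  have hcom : ∀ g₀ : G, (μ g₀ : Matrix (Fin h) (Fin h) ℂ) * A = A * μ g₀ := by
    intro g₀
    calc (μ g₀ : Matrix (Fin h) (Fin h) ℂ) * A
        = (μ g₀ : Matrix (Fin h) (Fin h) ℂ) * A * ((μ g₀ : Matrix (Fin h) (Fin h) ℂ)ᴴ * μ g₀) := by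
          rw [hstar g₀, mul_one]
      _ = ((μ g₀ : Matrix (Fin h) (Fin h) ℂ) * A * (μ g₀ : Matrix (Fin h) (Fin h) ℂ)ᴴ) * μ g₀ := by
          simp [mul_assoc]
      _ = A * μ g₀ := by rw [hkey g₀]
  obtain ⟨c, hcA⟩ := commute_scalar hh μ hirr A hcom
  have htr : A.trace = (Fintype.card G : ℂ) * M.trace := by
    rw [hAdef, Matrix.trace_sum]
    have hterm : ∀ g : G, ((μ g : Matrix (Fin h) (Fin h) ℂ) * M * (μ g : Matrix (Fin h) (Fin h) ℂ)ᴴ).trace = M.trace := by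
      intro g
      rw [Matrix.trace_mul_cycle, hstar g, one_mul]
    simp [hterm, Finset.sum_const, nsmul_eq_mul]
  have htrc : A.trace = c * h := by
    rw [hcA, Matrix.trace_smul, Matrix.trace_one]
    simp [mul_comm]
  have hh0 : (h : ℂ) ≠ 0 := Nat.cast_ne_zero.mpr (by omega)
  have hG0 : (Fintype.card G : ℂ) ≠ 0 := Nat.cast_ne_zero.mpr Fintype.card_ne_zero
  have hc : c = (Fintype.card G : ℂ) * M.trace / h := by
    rw [eq_div_iff hh0, ← htrc, htr]
  rw [hcA, hc, smul_smul]
  congr 1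
  field_simp


lemma block_entry {h v₁ v₂ : ℕ} (U : Matrix (Fin h) (Fin h) ℂ)
    (F : Matrix (Fin v₂ × Fin h) (Fin v₁ × Fin h) ℂ) (a : Fin v₂) (b : Fin v₁) (i j : Fin h) :
    ((((1 : Matrix (Fin v₂) (Fin v₂) ℂ) ⊗ₖ U) * F *
      ((1 : Matrix (Fin v₁) (Fin v₁) ℂ) ⊗ₖ U)ᴴ)) (a, i) (b, j) =
    (U * (Matrix.of fun i j => F (a, i) (b, j)) * Uᴴ) i j := by
  simp [Matrix.mul_apply, Matrix.kroneckerMap_apply, Matrix.conjTranspose_apply,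
    Matrix.one_apply, Fintype.sum_prod_type, Finset.sum_mul, Finset.mul_sum, ite_mul, mul_ite,
    mul_zero, zero_mul, star_mul', apply_ite (starRingEnd ℂ), map_zero, mul_assoc, Finset.sum_ite_eq, Finset.sum_ite_eq',
    mul_comm, mul_left_comm]

/-- Corollary `lemma-3262332`, finite group case: averaging a map over the
diagonal action of an irreducible yields a partial trace tensored with the identity. -/
theorem stmt_7 (G : Type*) [Group G] [Fintype G] (h v₁ v₂ : ℕ)
    (hh : 1 ≤ h) (hv₁ : 1 ≤ v₁) (hv₂ : 1 ≤ v₂)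
    (μ : G →* Matrix.unitaryGroup (Fin h) ℂ)
    (hirr : IsIrreducibleRep μ)
    (F : Matrix (Fin v₂ × Fin h) (Fin v₁ × Fin h) ℂ) :
    (1 / (Fintype.card G : ℂ)) •
      ∑ g : G,
        ((1 : Matrix (Fin v₂) (Fin v₂) ℂ) ⊗ₖ (μ g : Matrix (Fin h) (Fin h) ℂ)) * F *
          ((1 : Matrix (Fin v₁) (Fin v₁) ℂ) ⊗ₖ (μ g : Matrix (Fin h) (Fin h) ℂ))ᴴ =
      (Matrix.of fun a b => (1 / (h : ℂ)) * ∑ i : Fin h, F (a, i) (b, i)) ⊗ₖ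
        (1 : Matrix (Fin h) (Fin h) ℂ) := by
  have key := fun (a : Fin v₂) (b : Fin v₁) =>
    schur_avg hh μ hirr (Matrix.of fun i j => F (a, i) (b, j))
  ext ⟨a, i⟩ ⟨b, j⟩
  have h1 := congrFun (congrFun (key a b) i) j
  simp only [Matrix.smul_apply, Matrix.sum_apply, smul_eq_mul] at h1 ⊢
  rw [Finset.sum_congr rfl (fun g _ => block_entry (μ g : Matrix (Fin h) (Fin h) ℂ) F a b i j),
    h1]
  simp only [Matrix.kroneckerMap_apply, Matrix.of_apply, Matrix.trace, Matrix.diag_apply,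
    Matrix.smul_apply, smul_eq_mul]
  ring

end PaperStmt
end

section
/- Average of the diagonal double action of a real irreducible representation (Lemma lemma-3252341, first identity): Let G be a finite group, n ≥ 1, and let P : G →* Matrix.unitaryGroup (Fin n) ℂ be an irreducible unitary representation all of whose matrix entries are real, i.e., conj ((P g) i j) = (P g) i j for all g, i, j. Then (1/|G|) * ∑_{g ∈ G} ((P g) ⊗ₖ (P g)) = (1/n) • w * wᵀ, where w is the column vector indexed by Fin n × Fin n with w (i,j) = if i = j then 1 else 0 (the vectorization of the identity matrix); entrywise, for all i, j, k, l : Fin n, (1/|G|) * ∑_{g} (P g) i k * (P g) j l = (1/n) * (if i = j then 1 else 0) * (if k = l then 1 else 0). -/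
open scoped ComplexConjugate ComplexOrder Kronecker Matrix
open MeasureTheory

namespace PaperStmt

lemma schur_aux {G : Type*} [Group G] {n : ℕ} (hn : 1 ≤ n)
    (P : G →* Matrix.unitaryGroup (Fin n) ℂ) (hirr : IsIrreducibleRep P)
    (B : Matrix (Fin n) (Fin n) ℂ)
    (hB : ∀ g : G, (P g : Matrix (Fin n) (Fin n) ℂ) * B = B * (P g : Matrix (Fin n) (Fin n) ℂ)) :
    ∃ c : ℂ, B = c • (1 : Matrix (Fin n) (Fin n) ℂ) := by
  haveI : NeZero n := ⟨by omega⟩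
  obtain ⟨c, hc⟩ := Module.End.exists_eigenvalue (Matrix.toLin' B)
  refine ⟨c, ?_⟩
  set W := Module.End.eigenspace (Matrix.toLin' B) c with hW
  have hWinv : ∀ (g : G) (w : Fin n → ℂ), w ∈ W →
      ((P g : Matrix (Fin n) (Fin n) ℂ).mulVec w) ∈ W := by
    intro g w hw
    rw [hW, Module.End.mem_eigenspace_iff] at hw ⊢
    have h2 : Matrix.toLin' B ((P g : Matrix (Fin n) (Fin n) ℂ).mulVec w)
        = B.mulVec ((P g : Matrix (Fin n) (Fin n) ℂ).mulVec w) := by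
      simp [Matrix.toLin'_apply]
    rw [h2, Matrix.mulVec_mulVec, ← hB g, ← Matrix.mulVec_mulVec]
    rw [Matrix.toLin'_apply] at hw
    rw [hw, Matrix.mulVec_smul]
  rcases hirr W hWinv with h | h
  · exact absurd h hc
  · have hall : ∀ v : Fin n → ℂ, B.mulVec v = c • v := by
      intro v
      have hv : v ∈ W := h ▸ Submodule.mem_top
      rw [hW, Module.End.mem_eigenspace_iff, Matrix.toLin'_apply] at hv
      exact hv
    ext i j
    have hij := congrFun (hall (Pi.single j 1)) i
    simpa [Matrix.one_apply, Pi.single_apply, mul_comm] using hij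

/-- Lemma `lemma-3252341`, first identity: the average of `P g ⊗ P g` over a
real irreducible representation is the projector `(1/n) |I⟩⟨I|`. -/
theorem stmt_8 (G : Type*) [Group G] [Fintype G] (n : ℕ) (hn : 1 ≤ n)
    (P : G →* Matrix.unitaryGroup (Fin n) ℂ)
    (hirr : IsIrreducibleRep P)
    (hreal : ∀ (g : G) (i j : Fin n),
      conj ((P g : Matrix (Fin n) (Fin n) ℂ) i j) = (P g : Matrix (Fin n) (Fin n) ℂ) i j) :
    (1 / (Fintype.card G : ℂ)) •
      ∑ g : G, ((P g : Matrix (Fin n) (Fin n) ℂ) ⊗ₖ (P g : Matrix (Fin n) (Fin n) ℂ)) =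
    (1 / (n : ℂ)) • Matrix.vecMulVec
      (fun p : Fin n × Fin n => if p.1 = p.2 then (1 : ℂ) else 0)
      (fun p : Fin n × Fin n => if p.1 = p.2 then (1 : ℂ) else 0) := by
  have hcard : (Fintype.card G : ℂ) ≠ 0 := Nat.cast_ne_zero.mpr Fintype.card_ne_zero
  have hncast : (n : ℂ) ≠ 0 := Nat.cast_ne_zero.mpr (by omega)
  have cmul : ∀ a b : G, ((P (a * b) : Matrix (Fin n) (Fin n) ℂ))
      = (P a : Matrix (Fin n) (Fin n) ℂ) * (P b : Matrix (Fin n) (Fin n) ℂ) := by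
    intro a b; rw [map_mul]; rfl
  have hone : ∀ h : G, ((P h⁻¹ : Matrix (Fin n) (Fin n) ℂ)) * (P h : Matrix (Fin n) (Fin n) ℂ)
      = 1 := by
    intro h; rw [← cmul, inv_mul_cancel, map_one]; rfl
  have hPinv_entry : ∀ (g : G) (a b : Fin n),
      (P g⁻¹ : Matrix (Fin n) (Fin n) ℂ) a b = (P g : Matrix (Fin n) (Fin n) ℂ) b a := by
    intro g a b
    have : ((P g⁻¹ : Matrix (Fin n) (Fin n) ℂ)) = star (P g : Matrix (Fin n) (Fin n) ℂ) := by
      rw [map_inv]; rfl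
    rw [this, Matrix.star_apply]
    exact hreal g b a
  ext ⟨i, j⟩ ⟨k, l⟩
  simp only [Matrix.smul_apply, Matrix.sum_apply, Matrix.kroneckerMap_apply,
    Matrix.vecMulVec_apply, smul_eq_mul]
  set E : Matrix (Fin n) (Fin n) ℂ := Matrix.single k l 1 with hE
  set B : Matrix (Fin n) (Fin n) ℂ := (1 / (Fintype.card G : ℂ)) •
    ∑ g : G, (P g : Matrix (Fin n) (Fin n) ℂ) * E * (P g⁻¹ : Matrix (Fin n) (Fin n) ℂ) with hBdef
  have hB : ∀ h : G, (P h : Matrix (Fin n) (Fin n) ℂ) * B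
      = B * (P h : Matrix (Fin n) (Fin n) ℂ) := by
    intro h
    rw [hBdef, Matrix.mul_smul, Matrix.smul_mul, Finset.mul_sum, Finset.sum_mul]
    congr 1
    refine Fintype.sum_equiv (Equiv.mulLeft h) _ _ ?_
    intro g
    show (P h : Matrix (Fin n) (Fin n) ℂ) *
        ((P g : Matrix (Fin n) (Fin n) ℂ) * E * (P g⁻¹ : Matrix (Fin n) (Fin n) ℂ))
      = (P (h * g) : Matrix (Fin n) (Fin n) ℂ) * E *
          (P (h * g)⁻¹ : Matrix (Fin n) (Fin n) ℂ) * (P h : Matrix (Fin n) (Fin n) ℂ)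
    rw [mul_inv_rev, cmul h g, cmul g⁻¹ h⁻¹]
    simp only [mul_assoc]
    rw [hone h, mul_one]
  obtain ⟨c, hc⟩ := schur_aux hn P hirr B hB
  have htrE : E.trace = if k = l then 1 else 0 := by
    by_cases h : k = l
    · subst h
      simp [hE, Matrix.trace, Matrix.single, Finset.sum_ite_eq]
    · rw [if_neg h, hE, Matrix.trace]
      refine Finset.sum_eq_zero fun x _ => ?_
      simp only [Matrix.diag_apply, Matrix.single, Matrix.of_apply]
      rw [if_neg]
      rintro ⟨rfl, rfl⟩
      exact h rfl
  have htr : B.trace = if k = l then 1 else 0 := by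
    have hterm : ∀ g : G,
        ((P g : Matrix (Fin n) (Fin n) ℂ) * E * (P g⁻¹ : Matrix (Fin n) (Fin n) ℂ)).trace
          = E.trace := by
      intro g
      rw [Matrix.trace_mul_cycle, hone g, one_mul]
    rw [hBdef, Matrix.trace_smul]
    rw [Matrix.trace_sum, Finset.sum_congr rfl (fun g _ => hterm g), Finset.sum_const,
      htrE, smul_eq_mul, nsmul_eq_mul]
    field_simp
    rw [Finset.card_univ]
  have hcval : c = (if k = l then 1 else 0) / (n : ℂ) := by
    have h2 : B.trace = c * n := by
      rw [hc, Matrix.trace_smul, Matrix.trace_one, smul_eq_mul]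
      simp
    rw [h2] at htr
    field_simp at htr ⊢
    linear_combination htr
  have hentry : ∀ (A C : Matrix (Fin n) (Fin n) ℂ), (A * E * C) i j = A i k * C l j := by
    intro A C
    rw [Matrix.mul_assoc, Matrix.mul_apply]
    rw [Finset.sum_eq_single k]
    · simp [hE]
    · intro b _ hb
      rw [Matrix.single_mul_apply_of_ne 1 k l b j hb, mul_zero]
    · simp
  have hB_entry : B i j = (1 / (Fintype.card G : ℂ)) *
      ∑ g : G, (P g : Matrix (Fin n) (Fin n) ℂ) i k * (P g : Matrix (Fin n) (Fin n) ℂ) j l := by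
    rw [hBdef, Matrix.smul_apply, Matrix.sum_apply, smul_eq_mul]
    congr 1
    refine Finset.sum_congr rfl fun g _ => ?_
    rw [hentry, hPinv_entry]
  have hfin : B i j = c * (if i = j then 1 else 0) := by
    rw [hc, Matrix.smul_apply, Matrix.one_apply, smul_eq_mul]
  rw [← hB_entry, hfin, hcval]
  ring


end PaperStmt
end

section
/- Sample lower bound for purity testing (Theorem thm:purity, explicit form): Let d ≥ 2, ε ∈ (0, 1), and S ≥ 1. Suppose T is a matrix indexed by (Fin S → Fin d) with 0 ⊑ T ⊑ 1 (Loewner) such that (completeness) tr(T * (ψψ†)^{⊗S}) ≥ 2/3 for every unit vector ψ : Fin d → ℂ, and (soundness) tr(T * ρ^{⊗S}) ≤ 1/3 for every density matrix ρ on Fin d satisfying d_tr(ρ, ψψ†) ≥ ε for every unit vector ψ : Fin d → ℂ. Then (1 − ε)^S ≤ 8/9, and consequently S ≥ 1/(9ε). -/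
open scoped ComplexConjugate ComplexOrder Kronecker Matrix
open MeasureTheory

namespace PaperStmt

/-!
For `ε ≤ 1/2` take the diagonal state `ρ = diag(1 - ε, ε, 0, …)`. It is `ε`-far from every pure
state: for a unit vector `ψ`, `⟪ψ, (ρ - ψψ†) ψ⟫ ≤ (1 - ε) - 1 = -ε`, and since `ρ - ψψ†` is
traceless, half its trace norm bounds the modulus of each of its eigenvalues. On the other hand
`ρ^{⊗S}` has diagonal entry `(1 - ε)^S` at `e₀^{⊗S}`, where completeness makes the (nonnegative)
diagonal of `T` at least `2/3`; so soundness gives `2/3 · (1 - ε)^S ≤ 1/3`. For `ε > 1/2` already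
`(1 - ε)^S ≤ 1 - ε < 1/2`. Bernoulli's inequality `1 - Sε ≤ (1 - ε)^S` yields `S ≥ 1/(9ε)`.
-/

open Matrix

theorem neg_half_sum_abs_le_of_sum_eq_zero {ι : Type*} [Fintype ι] {f : ι → ℝ}
    (hf : ∑ i, f i = 0) (j : ι) : -(1 / 2 * ∑ i, |f i|) ≤ f j := by
  have hj : |f j| - f j ≤ ∑ i, (|f i| - f i) :=
    Finset.single_le_sum (f := fun i => |f i| - f i)
      (fun i _ => sub_nonneg.mpr (le_abs_self (f i))) (Finset.mem_univ j)
  rw [Finset.sum_sub_distrib, hf] at hj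
  linarith [neg_abs_le (f j)]

open scoped MatrixOrder in
theorem _root_.Matrix.IsHermitian.mul_re_dotProduct_le_of_forall_le_eigenvalues
    {𝕜 n : Type*} [RCLike 𝕜] [Fintype n] [DecidableEq n] {A : Matrix n n 𝕜}
    (hA : A.IsHermitian) {r : ℝ} (hr : ∀ i, r ≤ hA.eigenvalues i) (v : n → 𝕜) :
    r * RCLike.re (star v ⬝ᵥ v) ≤ RCLike.re (star v ⬝ᵥ A *ᵥ v) := by
  have hle : algebraMap ℝ (Matrix n n 𝕜) r ≤ A := by
    rw [algebraMap_le_iff_le_spectrum hA.isSelfAdjoint, hA.spectrum_real_eq_range_eigenvalues]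
    rintro _ ⟨i, rfl⟩
    exact hr i
  simpa [sub_mulVec, Algebra.algebraMap_eq_smul_one, smul_mulVec, sub_nonneg,
    RCLike.smul_re] using (le_iff.mp hle).re_dotProduct_nonneg v

theorem IsUnitVec.star_dotProduct_self {ι : Type*} [Fintype ι] {ψ : ι → ℂ} (hψ : IsUnitVec ψ) :
    star ψ ⬝ᵥ ψ = 1 := by
  simp only [dotProduct, Pi.star_apply, RCLike.star_def, ← Complex.normSq_eq_conj_mul_self]
  exact_mod_cast hψ

theorem le_traceDist_of_re_dotProduct_le {κ : Type*} [Fintype κ] [DecidableEq κ]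
    {ρ σ : Matrix κ κ ℂ} (hH : (ρ - σ).IsHermitian) (htr : (ρ - σ).trace = 0)
    {v : κ → ℂ} (hv : IsUnitVec v) {ε : ℝ} (hε : (star v ⬝ᵥ (ρ - σ) *ᵥ v).re ≤ -ε) :
    ε ≤ traceDist ρ σ := by
  have hsum : ∑ i, hH.eigenvalues i = 0 := by
    have h := hH.trace_eq_sum_eigenvalues
    rwa [htr, ← RCLike.ofReal_sum, eq_comm, RCLike.ofReal_eq_zero] at h
  have := hH.mul_re_dotProduct_le_of_forall_le_eigenvalues
    (neg_half_sum_abs_le_of_sum_eq_zero hsum) v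
  rw [hv.star_dotProduct_self, RCLike.one_re, mul_one, RCLike.re_to_complex] at this
  rw [traceDist, dif_pos hH]
  linarith

section Outer

variable {ι : Type*}

theorem outer_eq_vecMulVec (ψ : ι → ℂ) : outer ψ = vecMulVec ψ (star ψ) := rfl

theorem isHermitian_outer (ψ : ι → ℂ) : (outer ψ).IsHermitian := by
  rw [outer_eq_vecMulVec, IsHermitian, conjTranspose_vecMulVec, star_star]

theorem IsUnitVec.trace_outer [Fintype ι] {ψ : ι → ℂ} (hψ : IsUnitVec ψ) :
    (outer ψ).trace = 1 := by
  rw [outer_eq_vecMulVec, trace_vecMulVec, dotProduct_comm, hψ.star_dotProduct_self]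

theorem IsUnitVec.star_dotProduct_outer_mulVec [Fintype ι] {ψ : ι → ℂ} (hψ : IsUnitVec ψ) :
    star ψ ⬝ᵥ outer ψ *ᵥ ψ = 1 := by
  rw [outer_eq_vecMulVec, vecMulVec_mulVec, hψ.star_dotProduct_self]
  simpa using hψ.star_dotProduct_self

theorem tpow_outer (ψ : ι → ℂ) (N : ℕ) :
    tpow (outer ψ) N = outer fun x : Fin N → ι => ∏ i, ψ (x i) := by
  ext x y
  simp [tpow, outer, Finset.prod_mul_distrib, map_prod]

theorem tpow_diagonal [DecidableEq ι] (f : ι → ℂ) (N : ℕ) :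
    tpow (diagonal f) N = diagonal fun x : Fin N → ι => ∏ i, f (x i) := by
  ext x y
  by_cases hxy : x = y
  · simp [tpow, hxy]
  · obtain ⟨i, hi⟩ := Function.ne_iff.mp hxy
    simp only [tpow, of_apply, diagonal_apply_ne _ hxy]
    exact Finset.prod_eq_zero (Finset.mem_univ i) (diagonal_apply_ne _ hi)

end Outer

section Diagonal

variable {ι : Type*} [Fintype ι] [DecidableEq ι]

theorem isUnitVec_single (a : ι) : IsUnitVec (Pi.single a (1 : ℂ)) := by
  simp [IsUnitVec, Pi.single_apply, apply_ite Complex.normSq]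

omit [Fintype ι] in
theorem outer_single (a : ι) : outer (Pi.single a (1 : ℂ)) = single a a 1 := by
  rw [outer_eq_vecMulVec, single_eq_single_vecMulVec_single, ← Pi.single_star, star_one]

theorem acc_outer_single {N : ℕ} (T : Matrix (Fin N → ι) (Fin N → ι) ℂ) (a : ι) :
    acc T (outer (Pi.single a (1 : ℂ))) = (T (fun _ => a) (fun _ => a)).re := by
  have hprod : (fun x : Fin N → ι => ∏ i, (Pi.single a 1 : ι → ℂ) (x i)) =
      Pi.single (fun _ => a) 1 := by
    ext x
    simp [Pi.single_apply, Finset.prod_boole, funext_iff]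
  rw [acc, tpow_outer, hprod, outer_single, trace_mul_single]
  simp

theorem isDensity_diagonal {p : ι → ℝ} (hp : 0 ≤ p) (hsum : ∑ i, p i = 1) :
    IsDensity (diagonal fun i => (p i : ℂ)) :=
  ⟨PosSemidef.diagonal fun i => Complex.zero_le_real.mpr (hp i), by
    rw [trace_diagonal, ← Complex.ofReal_sum, hsum, Complex.ofReal_one]⟩

theorem re_star_dotProduct_diagonal_mulVec (p : ι → ℝ) (ψ : ι → ℂ) :
    (star ψ ⬝ᵥ diagonal (fun i => (p i : ℂ)) *ᵥ ψ).re = ∑ i, p i * Complex.normSq (ψ i) := by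
  simp only [dotProduct, mulVec_diagonal, Complex.re_sum, Pi.star_apply, RCLike.star_def,
    Complex.mul_re, Complex.mul_im, Complex.conj_re, Complex.conj_im, Complex.ofReal_re,
    Complex.ofReal_im, Complex.normSq_apply]
  exact Finset.sum_congr rfl fun i _ => by ring

theorem le_traceDist_diagonal_outer {p : ι → ℝ} (hsum : ∑ i, p i = 1) {ε : ℝ}
    (hp : ∀ i, p i ≤ 1 - ε) {ψ : ι → ℂ} (hψ : IsUnitVec ψ) :
    ε ≤ traceDist (diagonal fun i => (p i : ℂ)) (outer ψ) := by
  refine le_traceDist_of_re_dotProduct_le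
    ((isHermitian_diagonal_of_self_adjoint _ ?_).sub (isHermitian_outer ψ)) ?_ hψ ?_
  · ext i; simp
  · rw [trace_sub, trace_diagonal, ← Complex.ofReal_sum, hsum, hψ.trace_outer]; simp
  · rw [sub_mulVec, dotProduct_sub, Complex.sub_re, hψ.star_dotProduct_outer_mulVec,
      re_star_dotProduct_diagonal_mulVec]
    have : ∑ i, p i * Complex.normSq (ψ i) ≤ ∑ i, (1 - ε) * Complex.normSq (ψ i) :=
      Finset.sum_le_sum fun i _ => mul_le_mul_of_nonneg_right (hp i) (Complex.normSq_nonneg _)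
    rw [← Finset.mul_sum, hψ, mul_one] at this
    simp only [Complex.one_re]
    linarith

theorem mul_prod_le_acc_diagonal {N : ℕ} {T : Matrix (Fin N → ι) (Fin N → ι) ℂ}
    (hT : T.PosSemidef) {p : ι → ℝ} (hp : 0 ≤ p) (x : Fin N → ι) :
    (T x x).re * ∏ i, p (x i) ≤ acc T (diagonal fun i => (p i : ℂ)) := by
  have hTp : ∀ y, 0 ≤ (T y y).re * ∏ i, p (y i) := fun y =>
    mul_nonneg (Complex.nonneg_iff.mp hT.diag_nonneg).1 (Finset.prod_nonneg fun i _ => hp _)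
  have hacc : acc T (diagonal fun i => (p i : ℂ)) = ∑ y, (T y y).re * ∏ i, p (y i) := by
    simp [acc, tpow_diagonal, trace, mul_diagonal, Complex.re_sum, ← Complex.ofReal_prod]
  rw [hacc]
  exact Finset.single_le_sum (fun y _ => hTp y) (Finset.mem_univ x)

end Diagonal

theorem one_sub_pow_le_half {ι : Type*} [Fintype ι] [DecidableEq ι] [Nontrivial ι] {S : ℕ}
    {T : Matrix (Fin S → ι) (Fin S → ι) ℂ} (hT : T.PosSemidef) {ε : ℝ} (hε₀ : 0 ≤ ε)
    (hε : ε ≤ 1 / 2)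
    (hcomp : ∀ ψ : ι → ℂ, IsUnitVec ψ → 2 / 3 ≤ acc T (outer ψ))
    (hsound : ∀ ρ : Matrix ι ι ℂ, IsDensity ρ →
      (∀ ψ : ι → ℂ, IsUnitVec ψ → ε ≤ traceDist ρ (outer ψ)) → acc T ρ ≤ 1 / 3) :
    (1 - ε) ^ S ≤ 1 / 2 := by
  obtain ⟨a, b, hab⟩ := exists_pair_ne ι
  set p : ι → ℝ := Pi.single a (1 - ε) + Pi.single b ε
  have hp₀ : 0 ≤ p := add_nonneg (Pi.single_nonneg.2 (by linarith)) (Pi.single_nonneg.2 hε₀)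
  have hp_le : ∀ i, p i ≤ 1 - ε := by
    intro i
    simp only [p, Pi.add_apply, Pi.single_apply]
    split_ifs <;> grind
  have hsum : ∑ i, p i = 1 := by simp [p, Finset.sum_add_distrib]
  have hfar := hsound _ (isDensity_diagonal hp₀ hsum) fun ψ hψ =>
    le_traceDist_diagonal_outer hsum hp_le hψ
  have hpure := acc_outer_single T a ▸ hcomp _ (isUnitVec_single a)
  have hmass := mul_prod_le_acc_diagonal hT hp₀ (fun _ => a)
  have hpa : ∏ _i : Fin S, p a = (1 - ε) ^ S := by simp [p, hab.symm]
  rw [hpa] at hmass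
  have hacc : 2 / 3 * (1 - ε) ^ S ≤ 1 / 3 := calc 2 / 3 * (1 - ε) ^ S
      _ ≤ (T (fun _ => a) (fun _ => a)).re * (1 - ε) ^ S :=
        mul_le_mul_of_nonneg_right hpure (pow_nonneg (by linarith) S)
      _ ≤ acc T (diagonal fun i => (p i : ℂ)) := hmass
      _ ≤ 1 / 3 := hfar
  linarith

/-- Theorem `thm:purity`, explicit form: sample lower bound for purity
testing. -/
theorem stmt_12 (d : ℕ) (hd : 2 ≤ d) (ε : ℝ) (hε : ε ∈ Set.Ioo (0 : ℝ) 1)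
    (S : ℕ) (hS : 1 ≤ S)
    (T : Matrix (Fin S → Fin d) (Fin S → Fin d) ℂ)
    (hT : IsTester T)
    (hcomp : ∀ ψ : Fin d → ℂ, IsUnitVec ψ → 2 / 3 ≤ acc T (outer ψ))
    (hsound : ∀ ρ : Matrix (Fin d) (Fin d) ℂ, IsDensity ρ →
      (∀ ψ : Fin d → ℂ, IsUnitVec ψ → ε ≤ traceDist ρ (outer ψ)) →
      acc T ρ ≤ 1 / 3) :
    (1 - ε) ^ S ≤ 8 / 9 ∧ 1 / (9 * ε) ≤ (S : ℝ) := by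
  obtain ⟨hε₀, hε₁⟩ := hε
  have hpow : (1 - ε) ^ S ≤ 8 / 9 := by
    rcases le_or_gt ε (1 / 2) with hε | hε
    · have : Nontrivial (Fin d) := Fin.nontrivial_iff_two_le.mpr hd
      linarith [one_sub_pow_le_half hT.1 hε₀.le hε hcomp hsound]
    · calc (1 - ε) ^ S ≤ 1 - ε := pow_le_of_le_one (by linarith) (by linarith) (by omega)
        _ ≤ 8 / 9 := by linarith
  refine ⟨hpow, ?_⟩
  have hbernoulli := one_add_mul_le_pow (a := -ε) (by linarith) S
  rw [← sub_eq_add_neg] at hbernoulli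
  rw [div_le_iff₀ (by positivity)]
  linarith

end PaperStmt
end
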